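/- arXiv:2602.13508 — 6 statements merged into one kernel-verified Lean document; each statement's English description precedes it below -/
import Mathlib

section
/- Let N be a positive integer and let a : Fin k → ℕ be positive integers each dividing N. Then the set of residues modulo N of all sums Σᵢ jᵢ·aᵢ, where each jᵢ ranges over {1, …, N/aᵢ}, is exactly the set of multiples of g := gcd(a₁, …, a_k) in ℤ/Nℤ, i.e. {0, g, 2g, …, N − g}. -/
/-- Bézout for `Finset.gcd` of naturals, over the integers. -/
theorem gcd_bezout_aux {k : ℕ} (a : Fin k → ℕ) (s : Finset (Fin k)) :
    ∃ c : Fin k → ℤ, (∑ i ∈ s, c i * (a i : ℤ)) = ((s.gcd a : ℕ) : ℤ) := by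
  classical
  induction s using Finset.induction_on with
  | empty => exact ⟨0, by simp⟩
  | @insert i s hi ih =>
    obtain ⟨c, hc⟩ := ih
    set G : ℕ := s.gcd a with hG
    refine ⟨fun x => if x = i then Int.gcdA (a i : ℤ) (G : ℤ)
      else Int.gcdB (a i : ℤ) (G : ℤ) * c x, ?_⟩
    rw [Finset.sum_insert hi]
    have hgcd : ((Nat.gcd (a i) G : ℤ)) = (a i : ℤ) * Int.gcdA (a i : ℤ) (G : ℤ)
        + (G : ℤ) * Int.gcdB (a i : ℤ) (G : ℤ) := by
      have := Int.gcd_eq_gcd_ab (a i : ℤ) (G : ℤ)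
      simpa using this
    have hsum : ∑ x ∈ s, (if x = i then Int.gcdA (a i : ℤ) (G : ℤ)
        else Int.gcdB (a i : ℤ) (G : ℤ) * c x) * (a x : ℤ)
        = Int.gcdB (a i : ℤ) (G : ℤ) * ∑ x ∈ s, c x * (a x : ℤ) := by
      rw [Finset.mul_sum]
      refine Finset.sum_congr rfl fun x hx => ?_
      have hxi : x ≠ i := fun h => hi (h ▸ hx)
      simp only [if_neg hxi]; ring
    have hins : ((insert i s).gcd a : ℕ) = Nat.gcd (a i) G := by
      rw [Finset.gcd_insert]; rfl
    simp only [if_pos rfl, hsum, hc, hins, hgcd, if_true]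
    ring

/-- For positive integers `a i` each dividing `N > 0`, the residues mod `N` of sums
`∑ i, j i * a i` with `1 ≤ j i ≤ N / a i` are exactly the multiples of
`g = gcd (a 1, …, a k)` in `ZMod N`. -/
theorem stmt2 (k N : ℕ) (hk : 0 < k) (hN : 0 < N) (a : Fin k → ℕ)
    (hpos : ∀ i, 0 < a i) (hdvd : ∀ i, a i ∣ N) :
    {x : ZMod N | ∃ j : Fin k → ℕ, (∀ i, 1 ≤ j i ∧ j i ≤ N / a i) ∧
        x = ((∑ i, j i * a i : ℕ) : ZMod N)} =
    {x : ZMod N | ∃ m : ℕ, x = ((m * Finset.univ.gcd a : ℕ) : ZMod N)} := by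
  classical
  set g := Finset.univ.gcd a with hg
  ext x
  simp only [Set.mem_setOf_eq]
  constructor
  · rintro ⟨j, hj, rfl⟩
    have hdvdsum : g ∣ ∑ i, j i * a i :=
      Finset.dvd_sum fun i _ => Dvd.dvd.mul_left (Finset.gcd_dvd (Finset.mem_univ i)) _
    exact ⟨(∑ i, j i * a i) / g, by rw [Nat.div_mul_cancel hdvdsum]⟩
  · rintro ⟨m, rfl⟩
    obtain ⟨c, hc⟩ := gcd_bezout_aux a Finset.univ
    set q : Fin k → ℕ := fun i => N / a i with hq
    have hqpos : ∀ i, 0 < q i := fun i => Nat.div_pos (Nat.le_of_dvd hN (hdvd i)) (hpos i)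
    set d : Fin k → ℤ := fun i => m * c i with hd
    set j : Fin k → ℕ := fun i => ((d i - 1) % (q i : ℤ)).toNat + 1 with hj
    have hnn : ∀ i, 0 ≤ (d i - 1) % (q i : ℤ) := fun i =>
      Int.emod_nonneg _ (by exact_mod_cast (hqpos i).ne')
    have hlt : ∀ i, (d i - 1) % (q i : ℤ) < q i := fun i =>
      Int.emod_lt_of_pos _ (by exact_mod_cast hqpos i)
    have hjcast : ∀ i, (j i : ℤ) = (d i - 1) % (q i : ℤ) + 1 := by
      intro i; simp [hj, Int.toNat_of_nonneg (hnn i)]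
    have hdq : ∀ i, ((N : ℤ)) ∣ (j i : ℤ) * a i - d i * a i := by
      intro i
      have hqd : (q i : ℤ) ∣ (j i : ℤ) - d i := by
        rw [hjcast i]
        have h1 : (d i - 1) % (q i : ℤ) ≡ d i - 1 [ZMOD (q i : ℤ)] :=
          Int.emod_emod_of_dvd _ dvd_rfl
        have h2 : (d i - 1) % (q i : ℤ) + 1 ≡ d i [ZMOD (q i : ℤ)] := by
          simpa using h1.add_right 1
        exact h2.symm.dvd
      have hN' : (N : ℤ) = (q i : ℤ) * a i := by
        exact_mod_cast (Nat.div_mul_cancel (hdvd i)).symm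
      calc (N : ℤ) = (q i : ℤ) * a i := hN'
        _ ∣ ((j i : ℤ) - d i) * a i := mul_dvd_mul_right hqd _
        _ = (j i : ℤ) * a i - d i * a i := by ring
    have h1 : ((m * g : ℕ) : ℤ) = ∑ i, d i * (a i : ℤ) := by
      push_cast
      rw [← hc, Finset.mul_sum]
      exact Finset.sum_congr rfl fun i _ => by rw [hd]; ring
    refine ⟨j, fun i => ⟨Nat.le_add_left _ _, ?_⟩, ?_⟩
    · have hlt' := hlt i
      have h2 : ((d i - 1) % (q i : ℤ)).toNat < q i := by
        rw [Int.toNat_lt (hnn i)]; exact_mod_cast hlt'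
      have e1 : j i = ((d i - 1) % (q i : ℤ)).toNat + 1 := rfl
      have e2 : q i = N / a i := rfl
      omega
    · have key : ((∑ i, j i * a i : ℕ) : ZMod N) = ((m * g : ℕ) : ZMod N) := by
        calc ((∑ i, j i * a i : ℕ) : ZMod N)
            = ∑ i, (((j i : ℤ) * a i : ℤ) : ZMod N) := by push_cast; rfl
          _ = ∑ i, ((d i * (a i : ℤ) : ℤ) : ZMod N) := by
              refine Finset.sum_congr rfl fun i _ => ?_
              rw [← sub_eq_zero, ← Int.cast_sub]
              exact (ZMod.intCast_zmod_eq_zero_iff_dvd _ N).mpr (hdq i)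
          _ = ((∑ i, d i * (a i : ℤ) : ℤ) : ZMod N) := by push_cast; rfl
          _ = ((m * g : ℕ) : ZMod N) := by rw [← h1]; push_cast; rfl
      exact key.symm
end

section
/- Let Z(T) = Q(T)/∏_{i=1}^{r}(1 − x^{−c_i}T^N)^{e_i} be a rational function over ℤ[x, x⁻¹] with r, N, c_i, e_i positive integers, c₁ < ⋯ < c_r, and Q ∈ ℤ[x, x⁻¹][T]. Suppose Q is not divisible by 1 − x^{−c_i}T^N (in the suitable extension ring A[T] where A contains fractional powers of x and inverses of 1 − ξx^q) for some fixed i. Then −c_i/N is a pole of Z(T) of order exactly e_i. -/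
open Polynomial

lemma trans_pow_inj {K : Type*} [Field K] [CharZero K] {y : K}
    (hy : Transcendental ℚ y) {a b : ℕ} (h : y ^ a = y ^ b) : a = b := by
  by_contra hne
  refine hy ⟨X ^ a - X ^ b, ?_, by simp [h]⟩
  intro h0
  have := congrArg (fun p : Polynomial ℚ => p.coeff (max a b)) h0
  rcases le_or_gt a b with hab | hab
  · simp [coeff_X_pow, max_eq_right hab, (lt_of_le_of_ne hab hne).ne'] at this
  · simp [coeff_X_pow, max_eq_left hab.le, hne] at this

/-- Lemma 2.7(2): Let `K` be an algebraically closed field of characteristic zero,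
`y` transcendental over `ℚ` (playing the role of `x^{1/N}`, with `x = y^N`).
Let `Z(T) = Q(T) / ∏ i (1 - x^{-c i} T^N)^{e i}` with `Q` a polynomial with
coefficients in `ℤ[x, x⁻¹]`, `c` strictly increasing and positive.  If `Q` is not
divisible by `1 - x^{-c i₀} T^N`, then `-c i₀ / N` is a pole of `Z` of order exactly
`e i₀`: the maximum over `N`-th roots of unity `ξ` of the difference of the orders of
vanishing at `T = ξ·x^{c i₀/N} = ξ·y^{c i₀}` of denominator and numerator equals `e i₀`. -/
theorem stmt4 {K : Type*} [Field K] [IsAlgClosed K] [CharZero K]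
    (y : K) (hy : Transcendental ℚ y)
    (r N : ℕ) (hr : 0 < r) (hN : 0 < N)
    (c e : Fin r → ℕ) (hcpos : ∀ i, 0 < c i) (hepos : ∀ i, 0 < e i)
    (hmono : StrictMono c)
    (Q : K[X]) (hQcoeff : ∀ n, Q.coeff n ∈ Subring.closure {y ^ N, (y ^ N)⁻¹})
    (i₀ : Fin r)
    (hQ : ¬ ((1 - C (((y ^ N)⁻¹) ^ (c i₀)) * X ^ N) ∣ Q)) :
    (∀ ξ : K, ξ ^ N = 1 →
      ((∏ i, (1 - C (((y ^ N)⁻¹) ^ (c i)) * X ^ N) ^ (e i)).rootMultiplicity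
          (ξ * y ^ (c i₀)) : ℤ) - Q.rootMultiplicity (ξ * y ^ (c i₀)) ≤ (e i₀ : ℤ)) ∧
    (∃ ξ : K, ξ ^ N = 1 ∧
      ((∏ i, (1 - C (((y ^ N)⁻¹) ^ (c i)) * X ^ N) ^ (e i)).rootMultiplicity
          (ξ * y ^ (c i₀)) : ℤ) - Q.rootMultiplicity (ξ * y ^ (c i₀)) = (e i₀ : ℤ)) := by
  classical
  have hy0 : y ≠ 0 := fun h => hy (h ▸ isAlgebraic_zero)
  have hx0 : (y : K) ^ N ≠ 0 := pow_ne_zero _ hy0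
  have hNK : (N : K) ≠ 0 := Nat.cast_ne_zero.mpr hN.ne'
  set p : Fin r → K[X] := fun i => X ^ N - C ((y ^ N) ^ c i) with hp
  have hpmonic : ∀ i, (p i).Monic := fun i => monic_X_pow_sub_C _ hN.ne'
  have hpsep : ∀ i, (p i).Separable := fun i =>
    separable_X_pow_sub_C _ hNK (pow_ne_zero _ hx0)
  have hu0 : ∀ i, (-(((y ^ N)⁻¹) ^ c i)) ≠ 0 := fun i =>
    neg_ne_zero.mpr (pow_ne_zero _ (inv_ne_zero hx0))
  have hfact : ∀ i, (1 - C (((y ^ N)⁻¹) ^ (c i)) * X ^ N)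
      = C (-(((y ^ N)⁻¹) ^ c i)) * p i := by
    intro i
    have hcc : ((y ^ N)⁻¹) ^ c i * (y ^ N) ^ c i = 1 := by
      rw [← mul_pow, inv_mul_cancel₀ hx0, one_pow]
    rw [hp]
    simp only [map_neg, neg_mul, mul_sub, ← C_mul, hcc, map_one]
    ring
  have hpne : ∀ i, p i ≠ 0 := fun i => (hpmonic i).ne_zero
  have hfne : ∀ i, (1 - C (((y ^ N)⁻¹) ^ (c i)) * X ^ N) ≠ 0 := by
    intro i; rw [hfact i]
    exact mul_ne_zero (by simpa using hu0 i) (hpne i)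
  have heval : ∀ (ξ : K), ξ ^ N = 1 → ∀ i,
      (p i).eval (ξ * y ^ c i₀) = y ^ (N * c i₀) - y ^ (N * c i) := by
    intro ξ hξ i
    simp only [hp, eval_sub, eval_pow, eval_X, eval_C, mul_pow, hξ, one_mul, ← pow_mul]
    ring_nf
  have hczero : ∀ (ξ : K), ξ ^ N = 1 → ∀ i,
      (p i).IsRoot (ξ * y ^ c i₀) ↔ i = i₀ := by
    intro ξ hξ i
    rw [IsRoot, heval ξ hξ i, sub_eq_zero]
    constructor
    · intro h
      exact hmono.injective (Nat.eq_of_mul_eq_mul_left hN (trans_pow_inj hy h.symm))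
    · rintro rfl; rfl
  have hcount : ∀ (ξ : K), ξ ^ N = 1 → ∀ i,
      (p i).roots.count (ξ * y ^ c i₀) = if i = i₀ then 1 else 0 := by
    intro ξ hξ i
    by_cases h : i = i₀
    · subst h
      rw [if_pos rfl]
      refine le_antisymm (Multiset.nodup_iff_count_le_one.mp (nodup_roots (hpsep i)) _) ?_
      rw [Nat.one_le_iff_ne_zero, ← Nat.pos_iff_ne_zero, Multiset.count_pos,
        mem_roots (hpne i)]
      exact (hczero ξ hξ i).mpr rfl
    · rw [if_neg h, Multiset.count_eq_zero]
      intro hmem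
      exact h ((hczero ξ hξ i).mp ((mem_roots (hpne i)).mp hmem))
  have hDne : (∏ i, (1 - C (((y ^ N)⁻¹) ^ (c i)) * X ^ N) ^ (e i)) ≠ 0 :=
    Finset.prod_ne_zero_iff.mpr fun i _ => pow_ne_zero _ (hfne i)
  have hDmult : ∀ (ξ : K), ξ ^ N = 1 →
      (∏ i, (1 - C (((y ^ N)⁻¹) ^ (c i)) * X ^ N) ^ (e i)).rootMultiplicity
        (ξ * y ^ c i₀) = e i₀ := by
    intro ξ hξ
    rw [← count_roots, roots_prod _ _ hDne, Multiset.count_bind]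
    have hterm : ∀ i : Fin r,
        ((1 - C (((y ^ N)⁻¹) ^ (c i)) * X ^ N) ^ (e i)).roots.count (ξ * y ^ c i₀)
          = if i = i₀ then e i else 0 := by
      intro i
      rw [roots_pow, Multiset.count_nsmul, hfact i, roots_C_mul _ (hu0 i), hcount ξ hξ i]
      by_cases h : i = i₀ <;> simp [h]
    have : (Multiset.map
          (fun i => ((1 - C (((y ^ N)⁻¹) ^ (c i)) * X ^ N) ^ (e i)).roots.count
            (ξ * y ^ c i₀)) Finset.univ.val).sum
        = ∑ i : Fin r, (if i = i₀ then e i else 0) :=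
      congrArg Multiset.sum (Multiset.map_congr rfl fun i _ => hterm i)
    rw [this, Finset.sum_ite_eq' Finset.univ i₀ e]
    simp
  -- existence of a root of unity where Q does not vanish
  have hexists : ∃ ξ : K, ξ ^ N = 1 ∧ Q.eval (ξ * y ^ c i₀) ≠ 0 := by
    by_contra hcon
    push_neg at hcon
    apply hQ
    rw [hfact i₀]
    rw [(isUnit_C.mpr (IsUnit.mk0 _ (hu0 i₀))).mul_left_dvd]
    -- p i₀ divides Q
    have hsplit : Multiset.card (p i₀).roots = (p i₀).natDegree :=
      splits_iff_card_roots.mp (IsAlgClosed.splits _)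
    have hnodup : (p i₀).roots.Nodup := nodup_roots (hpsep i₀)
    have hroots_root : ∀ a ∈ (p i₀).roots, Q.IsRoot a := by
      intro a ha
      have haroot := (mem_roots (hpne i₀)).mp ha
      have haN : a ^ N = (y ^ c i₀) ^ N := by
        have := haroot
        rw [IsRoot, hp] at this
        simp only [eval_sub, eval_pow, eval_X, eval_C, sub_eq_zero] at this
        rw [this, ← pow_mul, ← pow_mul, mul_comm]
      have hyc : (y : K) ^ c i₀ ≠ 0 := pow_ne_zero _ hy0
      have hξ : (a / y ^ c i₀) ^ N = 1 := by
        rw [div_pow, haN, div_self (pow_ne_zero _ hyc)]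
      have := hcon (a / y ^ c i₀) hξ
      rwa [div_mul_cancel₀ _ hyc] at this
    have hdvd : ((p i₀).roots.toFinset.prod fun a => X - C a) ∣ Q := by
      refine Finset.prod_dvd_of_coprime ?_ ?_
      · intro a _ b _ hab
        exact Polynomial.pairwise_coprime_X_sub_C Function.injective_id hab
      · intro a ha
        rw [dvd_iff_isRoot]
        exact hroots_root a (by simpa using ha)
    have hval : (p i₀).roots.toFinset.val = (p i₀).roots := by
      rw [Multiset.toFinset_val, Multiset.dedup_eq_self.mpr hnodup]
    have hprodeq : ((p i₀).roots.toFinset.prod fun a => X - C a)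
        = ((p i₀).roots.map fun a => X - C a).prod := by
      rw [Finset.prod, hval]
    rw [hprodeq, prod_multiset_X_sub_C_of_monic_of_roots_card_eq (hpmonic i₀) hsplit] at hdvd
    exact hdvd
  constructor
  · intro ξ hξ
    rw [hDmult ξ hξ]
    have : (0 : ℤ) ≤ (Q.rootMultiplicity (ξ * y ^ c i₀) : ℤ) := Int.natCast_nonneg _
    omega
  · obtain ⟨ξ, hξ, hQeval⟩ := hexists
    refine ⟨ξ, hξ, ?_⟩
    rw [hDmult ξ hξ, rootMultiplicity_eq_zero hQeval]
    simp
end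

section
/- Let R be a signed graded ring with subpositive semiring R_#. If A₁, A₂ ∈ R_#⟦T⟧ (i.e. all coefficients are subpositive or zero), then the top-degree subseries satisfies (A₁ + A₂)^td = (A₁^td + A₂^td)^td, and this series has all coefficients positive or zero. -/
open DirectSum

variable {R : Type*} [CommRing R]

open scoped Classical in
/-- The top-degree homogeneous part of an element of a `ℤ`-graded ring, with `0^td = 0`. -/
noncomputable def td (𝒜 : ℤ → AddSubgroup R) [GradedRing 𝒜] (a : R) : R :=
  if h : a = 0 then 0
  else (decompose 𝒜 a ((DFinsupp.support (decompose 𝒜 a)).max'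
      (Finset.nonempty_of_ne_empty (by
        intro h0
        apply h
        have h1 : decompose 𝒜 a = 0 := DFinsupp.support_eq_empty.mp h0
        have := congrArg (decompose 𝒜).symm h1
        simpa using this))) : R)

/-- A signing on a `ℤ`-graded ring. -/
structure Signing (𝒜 : ℤ → AddSubgroup R) [GradedRing 𝒜] where
  P : ℤ → Set R
  subset : ∀ d, P d ⊆ (𝒜 d : Set R)
  add_mem : ∀ {d : ℤ} {a b : R}, a ∈ P d → b ∈ P d → a + b ∈ P d
  one_mem : (1 : R) ∈ P 0
  zero_not_mem : ∀ d, (0 : R) ∉ P d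
  mul_mem : ∀ {d e : ℤ} {a b : R}, a ∈ P d → b ∈ P e → a * b ∈ P (d + e)

/-- `a` is positive: a nonzero finite sum of elements of the `P d`'s. -/
def Signing.Positive {𝒜 : ℤ → AddSubgroup R} [GradedRing 𝒜] (S : Signing 𝒜) (a : R) : Prop :=
  a ≠ 0 ∧ a ∈ AddSubmonoid.closure (⋃ d, S.P d)

/-- `a` is subpositive: its top-degree part is positive. -/
noncomputable def Signing.Subpositive {𝒜 : ℤ → AddSubgroup R} [GradedRing 𝒜]
    (S : Signing 𝒜) (a : R) : Prop :=
  S.Positive (td 𝒜 a)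

/-- The coefficientwise top-degree subseries of a power series. -/
noncomputable def tdSeries (𝒜 : ℤ → AddSubgroup R) [GradedRing 𝒜]
    (A : PowerSeries R) : PowerSeries R :=
  PowerSeries.mk fun n => td 𝒜 (PowerSeries.coeff n A)


section TopDegree

variable {𝒜 : ℤ → AddSubgroup R} [GradedRing 𝒜]

def IsTopDegree (𝒜 : ℤ → AddSubgroup R) [GradedRing 𝒜] (a : R) (d : ℤ) : Prop :=
  (decompose 𝒜 a d : R) ≠ 0 ∧ ∀ e, (decompose 𝒜 a e : R) ≠ 0 → e ≤ d

theorem IsTopDegree.td_eq {a : R} {d : ℤ} (h : IsTopDegree 𝒜 a d) :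
    td 𝒜 a = (decompose 𝒜 a d : R) := by
  classical
  obtain ⟨hd, hmax⟩ := h
  have ha : a ≠ 0 := by
    rintro rfl
    simp at hd
  have hsupp : ∀ e, e ∈ DFinsupp.support (decompose 𝒜 a) ↔ (decompose 𝒜 a e : R) ≠ 0 := by
    simp
  have hmax' : ∀ hne, (DFinsupp.support (decompose 𝒜 a)).max' hne = d := fun hne =>
    le_antisymm (Finset.max'_le _ _ _ fun e he => hmax e ((hsupp e).1 he))
      (Finset.le_max' _ _ ((hsupp d).2 hd))
  rw [td, dif_neg ha, hmax']

theorem exists_isTopDegree {a : R} (ha : a ≠ 0) : ∃ d, IsTopDegree 𝒜 a d := by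
  classical
  have hsupp : ∀ e, e ∈ DFinsupp.support (decompose 𝒜 a) ↔ (decompose 𝒜 a e : R) ≠ 0 := by
    simp
  have hne : (DFinsupp.support (decompose 𝒜 a)).Nonempty := by
    rw [Finset.nonempty_iff_ne_empty, Ne, DFinsupp.support_eq_empty]
    exact fun h => ha ((decompose 𝒜).injective (h.trans (decompose_zero 𝒜).symm))
  exact ⟨_, (hsupp _).1 (Finset.max'_mem _ hne),
    fun e he => Finset.le_max' _ _ ((hsupp e).2 he)⟩

theorem isTopDegree_of_mem {x : R} {d : ℤ} (hx : x ∈ 𝒜 d) (hx0 : x ≠ 0) :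
    IsTopDegree 𝒜 x d := by
  refine ⟨by rwa [decompose_of_mem_same 𝒜 hx], fun e he => ?_⟩
  by_contra hlt
  exact he (decompose_of_mem_ne 𝒜 hx (ne_of_lt (not_le.mp hlt)))

theorem td_of_mem {x : R} {d : ℤ} (hx : x ∈ 𝒜 d) (hx0 : x ≠ 0) : td 𝒜 x = x := by
  rw [(isTopDegree_of_mem hx hx0).td_eq, decompose_of_mem_same 𝒜 hx]

theorem IsTopDegree.td_mem {a : R} {d : ℤ} (h : IsTopDegree 𝒜 a d) : td 𝒜 a ∈ 𝒜 d :=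
  h.td_eq ▸ SetLike.coe_mem _

theorem IsTopDegree.td_ne_zero {a : R} {d : ℤ} (h : IsTopDegree 𝒜 a d) : td 𝒜 a ≠ 0 :=
  h.td_eq ▸ h.1

theorem IsTopDegree.isTopDegree_td {a : R} {d : ℤ} (h : IsTopDegree 𝒜 a d) :
    IsTopDegree 𝒜 (td 𝒜 a) d :=
  isTopDegree_of_mem h.td_mem h.td_ne_zero

@[simp] theorem td_zero : td 𝒜 (0 : R) = 0 := dif_pos rfl

@[simp] theorem td_td (a : R) : td 𝒜 (td 𝒜 a) = td 𝒜 a := by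
  rcases eq_or_ne a 0 with rfl | ha
  · simp
  · obtain ⟨d, hd⟩ := exists_isTopDegree (𝒜 := 𝒜) ha
    exact td_of_mem hd.td_mem hd.td_ne_zero

theorem IsTopDegree.td_add_of_lt {a b : R} {da db : ℤ} (ha : IsTopDegree 𝒜 a da)
    (hb : IsTopDegree 𝒜 b db) (hlt : da < db) : td 𝒜 (a + b) = td 𝒜 b := by
  have hcomp : ∀ e, (decompose 𝒜 (a + b) e : R) = decompose 𝒜 a e + decompose 𝒜 b e := by
    simp [decompose_add]
  have ha_db : (decompose 𝒜 a db : R) = 0 := by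
    by_contra h
    exact absurd (ha.2 db h) (not_le.mpr hlt)
  have hab : IsTopDegree 𝒜 (a + b) db := by
    refine ⟨by rw [hcomp, ha_db, zero_add]; exact hb.1, fun e he => ?_⟩
    by_cases hae : (decompose 𝒜 a e : R) = 0
    · exact hb.2 e (by rwa [hcomp, hae, zero_add] at he)
    · exact (ha.2 e hae).trans hlt.le
  rw [hab.td_eq, hb.td_eq, hcomp, ha_db, zero_add]

theorem IsTopDegree.td_add_of_eq {a b : R} {d : ℤ} (ha : IsTopDegree 𝒜 a d)
    (hb : IsTopDegree 𝒜 b d) (hne : td 𝒜 a + td 𝒜 b ≠ 0) :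
    td 𝒜 (a + b) = td 𝒜 a + td 𝒜 b := by
  have hcomp : ∀ e, (decompose 𝒜 (a + b) e : R) = decompose 𝒜 a e + decompose 𝒜 b e := by
    simp [decompose_add]
  have hab : IsTopDegree 𝒜 (a + b) d := by
    refine ⟨by rwa [hcomp, ← ha.td_eq, ← hb.td_eq], fun e he => ?_⟩
    by_cases hae : (decompose 𝒜 a e : R) = 0
    · exact hb.2 e (by rwa [hcomp, hae, zero_add] at he)
    · exact ha.2 e hae
  rw [hab.td_eq, hcomp, ha.td_eq, hb.td_eq]

theorem td_add_eq_td_add_td {a b : R} {da db : ℤ} (ha : IsTopDegree 𝒜 a da)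
    (hb : IsTopDegree 𝒜 b db) (hne : da = db → td 𝒜 a + td 𝒜 b ≠ 0) :
    td 𝒜 (a + b) = td 𝒜 (td 𝒜 a + td 𝒜 b) := by
  rcases lt_trichotomy da db with hlt | rfl | hgt
  · rw [ha.td_add_of_lt hb hlt, ha.isTopDegree_td.td_add_of_lt hb.isTopDegree_td hlt, td_td]
  · rw [ha.td_add_of_eq hb (hne rfl), td_of_mem (add_mem ha.td_mem hb.td_mem) (hne rfl)]
  · rw [add_comm a, add_comm (td 𝒜 a), hb.td_add_of_lt ha hgt,
      hb.isTopDegree_td.td_add_of_lt ha.isTopDegree_td hgt, td_td]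

end TopDegree

namespace Signing

variable {𝒜 : ℤ → AddSubgroup R} [GradedRing 𝒜] (S : Signing 𝒜)

theorem decompose_eq_zero_or_mem_of_mem_closure {x : R}
    (hx : x ∈ AddSubmonoid.closure (⋃ d, S.P d)) (d : ℤ) :
    (decompose 𝒜 x d : R) = 0 ∨ (decompose 𝒜 x d : R) ∈ S.P d := by
  induction hx using AddSubmonoid.closure_induction with
  | mem y hy =>
    obtain ⟨e, he⟩ := Set.mem_iUnion.mp hy
    rcases eq_or_ne d e with rfl | hde
    · exact .inr ((decompose_of_mem_same 𝒜 (S.subset d he)).symm ▸ he)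
    · exact .inl (decompose_of_mem_ne 𝒜 (S.subset e he) hde.symm)
  | zero => simp
  | add a b _ _ iha ihb =>
    simp only [decompose_add, DirectSum.add_apply, AddSubgroup.coe_add]
    rcases iha with ha | ha <;> rcases ihb with hb | hb
    · exact .inl (by rw [ha, hb, add_zero])
    · exact .inr (by rwa [ha, zero_add])
    · exact .inr (by rwa [hb, add_zero])
    · exact .inr (S.add_mem ha hb)

theorem Positive.mem_P {x : R} {d : ℤ} (hpos : S.Positive x) (hx : x ∈ 𝒜 d) : x ∈ S.P d := by
  have := S.decompose_eq_zero_or_mem_of_mem_closure hpos.2 d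
  rw [decompose_of_mem_same 𝒜 hx] at this
  exact this.resolve_left hpos.1

theorem positive_of_mem_P {x : R} {d : ℤ} (hx : x ∈ S.P d) : S.Positive x :=
  ⟨fun h => S.zero_not_mem d (h ▸ hx), AddSubmonoid.subset_closure (Set.mem_iUnion.mpr ⟨d, hx⟩)⟩

theorem Subpositive.ne_zero {a : R} (ha : S.Subpositive a) : a ≠ 0 := by
  rintro rfl
  exact ha.1 td_zero

/-- Top-degree parts of subpositive elements of equal degree lie in the same `P d`, which is
closed under addition and avoids `0`, so they cannot cancel. -/
theorem Subpositive.td_add {a b : R} (ha : S.Subpositive a) (hb : S.Subpositive b) :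
    td 𝒜 (a + b) = td 𝒜 (td 𝒜 a + td 𝒜 b) ∧ S.Subpositive (a + b) := by
  obtain ⟨da, hda⟩ := exists_isTopDegree (𝒜 := 𝒜) (ha.ne_zero S)
  obtain ⟨db, hdb⟩ := exists_isTopDegree (𝒜 := 𝒜) (hb.ne_zero S)
  have hsum : da = db → td 𝒜 a + td 𝒜 b ∈ S.P da := by
    rintro rfl
    exact S.add_mem (ha.mem_P S hda.td_mem) (hb.mem_P S hdb.td_mem)
  have hne : da = db → td 𝒜 a + td 𝒜 b ≠ 0 := fun h => (S.positive_of_mem_P (hsum h)).1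
  refine ⟨td_add_eq_td_add_td hda hdb hne, ?_⟩
  rcases lt_trichotomy da db with hlt | rfl | hgt
  · rwa [Subpositive, hda.td_add_of_lt hdb hlt]
  · rw [Subpositive, hda.td_add_of_eq hdb (hne rfl)]
    exact S.positive_of_mem_P (hsum rfl)
  · rwa [Subpositive, add_comm, hdb.td_add_of_lt hda hgt]

theorem td_add_of_subpositive_or_eq_zero {a b : R}
    (ha : S.Subpositive a ∨ a = 0) (hb : S.Subpositive b ∨ b = 0) :
    td 𝒜 (a + b) = td 𝒜 (td 𝒜 a + td 𝒜 b) ∧ (S.Positive (td 𝒜 (a + b)) ∨ td 𝒜 (a + b) = 0) := by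
  rcases ha with ha | rfl <;> rcases hb with hb | rfl
  · exact (ha.td_add S hb).imp_right .inl
  · rw [add_zero, td_zero, add_zero, td_td]
    exact ⟨rfl, .inl ha⟩
  · rw [zero_add, td_zero, zero_add, td_td]
    exact ⟨rfl, .inl hb⟩
  · simp

end Signing

/-- Lemma 3.3(2): if all coefficients of `A₁, A₂` are subpositive or zero, then
`(A₁ + A₂)^td = (A₁^td + A₂^td)^td`, and this series has all coefficients positive
or zero. -/
theorem stmt7 (𝒜 : ℤ → AddSubgroup R) [GradedRing 𝒜] (S : Signing 𝒜)
    (A₁ A₂ : PowerSeries R)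
    (h1 : ∀ n, S.Subpositive (PowerSeries.coeff n A₁) ∨ PowerSeries.coeff n A₁ = 0)
    (h2 : ∀ n, S.Subpositive (PowerSeries.coeff n A₂) ∨ PowerSeries.coeff n A₂ = 0) :
    tdSeries 𝒜 (A₁ + A₂) = tdSeries 𝒜 (tdSeries 𝒜 A₁ + tdSeries 𝒜 A₂) ∧
    (∀ n, S.Positive (PowerSeries.coeff n (tdSeries 𝒜 (A₁ + A₂))) ∨
      PowerSeries.coeff n (tdSeries 𝒜 (A₁ + A₂)) = 0) := by
  have hcoeff n := S.td_add_of_subpositive_or_eq_zero (h1 n) (h2 n)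
  refine ⟨PowerSeries.ext fun n => ?_, fun n => ?_⟩ <;>
    simp only [tdSeries, PowerSeries.coeff_mk, map_add]
  exacts [(hcoeff n).1, (hcoeff n).2]
end

section
/- Let N be a positive integer, and for each i in a nonempty finite set S let N_i, ν_i be positive integers with N_i ∣ N. Fix 1 ≤ d ≤ N and suppose the set G_d of nonempty subsets I ⊂ S with gcd_{i∈I} N_i ∣ d and an auxiliary predicate E(I) (nonemptiness of the stratum) is nonempty. Define C_m := min over I ∈ G_m and a ∈ ℕ^I with Σ_{i∈I} a_i N_i = m of Σ_{i∈I} a_i ν_i (with C_m = +∞ if no such representation exists), and suppose N is divisible by lcm of all N_i so that G_{lN+d} = G_d for all l ≥ 0. Then the sequence l ↦ C_{lN+d}/(lN+d) is (weakly) decreasing in l, for l large enough that C_{lN+d} < ∞. -/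
/-!
Take an optimal representation `∑ aᵢNᵢ = lN + d` realising `C (lN+d)`, and pick `i₁` in its
support with `ν_{i₁}/N_{i₁}` minimal. Since `N_{i₁} ∣ N`, adding `N/N_{i₁}` to `a_{i₁}` gives a
representation of `(l+1)N + d` on the same stratum, which costs `N · ν_{i₁}/N_{i₁}` more. By
the mediant inequality `ν_{i₁}/N_{i₁} ≤ (∑ aᵢνᵢ)/(∑ aᵢNᵢ)`, the ratio cost/value does not increase.
-/

theorem Finset.exists_mul_sum_le_mul_sum {ι : Type*} {s : Finset ι} (hs : s.Nonempty)
    (a N ν : ι → ℕ) (hN : ∀ i ∈ s, 0 < N i) :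
    ∃ j ∈ s, ν j * ∑ i ∈ s, a i * N i ≤ N j * ∑ i ∈ s, a i * ν i := by
  obtain ⟨j, hj, hmin⟩ := s.exists_min_image (fun i => (ν i : ℚ) / N i) hs
  refine ⟨j, hj, ?_⟩
  rw [Finset.mul_sum, Finset.mul_sum]
  refine Finset.sum_le_sum fun i hi => ?_
  have hcross : ν j * N i ≤ ν i * N j := by
    have := hmin i hi
    rw [div_le_div_iff₀ (by exact_mod_cast hN j hj) (by exact_mod_cast hN i hi)] at this
    exact_mod_cast this
  calc ν j * (a i * N i) = a i * (ν j * N i) := by ring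
    _ ≤ a i * (ν i * N j) := Nat.mul_le_mul_left _ hcross
    _ = N j * (a i * ν i) := by ring

theorem Nat.add_mul_mul_le_mul_add_mul {v m ν n k : ℕ} (h : ν * m ≤ n * v) :
    (v + k * ν) * m ≤ v * (m + k * n) := by
  have : k * ν * m ≤ v * (k * n) := by nlinarith [Nat.mul_le_mul_left k h]
  nlinarith

theorem ENat.mul_le_top_mul {x : ℕ∞} {m m' : ℕ} (h : m ≤ m') :
    x * (m : ℕ∞) ≤ ⊤ * (m' : ℕ∞) := by
  rcases Nat.eq_zero_or_pos m with rfl | hm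
  · simp
  · rw [ENat.top_mul (by exact_mod_cast (hm.trans_le h).ne')]
    exact le_top

section Representations

variable {ι : Type*} (G : Finset (Finset ι)) (Nf νf : ι → ℕ)

def reprCosts (m : ℕ) : Set ℕ :=
  {v | ∃ I ∈ G, ∃ a : ι → ℕ, (∀ i, i ∉ I → a i = 0) ∧
    ∑ i ∈ I, a i * Nf i = m ∧ v = ∑ i ∈ I, a i * νf i}

theorem exists_mem_reprCosts_eq_sInf {m : ℕ}
    (h : sInf ((fun v : ℕ => (v : ℕ∞)) '' reprCosts G Nf νf m) ≠ ⊤) :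
    ∃ v ∈ reprCosts G Nf νf m, sInf ((fun v : ℕ => (v : ℕ∞)) '' reprCosts G Nf νf m) = v := by
  have hne : ((fun v : ℕ => (v : ℕ∞)) '' reprCosts G Nf νf m).Nonempty := by
    by_contra hempty
    rw [Set.not_nonempty_iff_eq_empty] at hempty
    exact h (by rw [hempty, sInf_empty])
  obtain ⟨v, hv, hCv⟩ := csInf_mem hne
  exact ⟨v, hv, hCv.symm⟩

theorem add_mul_mem_reprCosts {I : Finset ι} (hI : I ∈ G) {a : ι → ℕ}
    (ha : ∀ i, i ∉ I → a i = 0) {i₁ : ι} (hi₁ : i₁ ∈ I) (k : ℕ) :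
    ∑ i ∈ I, a i * νf i + k * νf i₁ ∈ reprCosts G Nf νf (∑ i ∈ I, a i * Nf i + k * Nf i₁) := by
  classical
  have hsingle : ∀ f : ι → ℕ, ∑ i ∈ I, (a + Pi.single i₁ k : ι → ℕ) i * f i =
      ∑ i ∈ I, a i * f i + k * f i₁ := fun f => by
    simp only [Pi.add_apply, add_mul, Finset.sum_add_distrib, Pi.single_apply, ite_mul,
      zero_mul, Finset.sum_ite_eq', if_pos hi₁]
  refine ⟨I, hI, a + Pi.single i₁ k, fun i hi => ?_, hsingle Nf, (hsingle νf).symm⟩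
  simp [ha i hi, ne_of_mem_of_not_mem hi₁ hi |>.symm]

end Representations

theorem stmt9_general {ι : Type*}
    (Nf νf : ι → ℕ) (hNf : ∀ i, 0 < Nf i)
    (N d : ℕ) (hdvd : ∀ i, Nf i ∣ N)
    (G : Finset (Finset ι))
    (hGne : ∀ I ∈ G, I.Nonempty)
    (C : ℕ → ℕ∞)
    (hC : ∀ m, C m = sInf ((fun v : ℕ => (v : ℕ∞)) ''
      {v | ∃ I ∈ G, ∃ a : ι → ℕ, (∀ i, i ∉ I → a i = 0) ∧
        ∑ i ∈ I, a i * Nf i = m ∧ v = ∑ i ∈ I, a i * νf i})) :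
    ∀ l : ℕ, C ((l + 1) * N + d) * ((l * N + d : ℕ) : ℕ∞)
      ≤ C (l * N + d) * (((l + 1) * N + d : ℕ) : ℕ∞) := by
  intro l
  have hC' : ∀ m, C m = sInf ((fun v : ℕ => (v : ℕ∞)) '' reprCosts G Nf νf m) := hC
  have hstep : (l + 1) * N + d = l * N + d + N := by ring
  by_cases htop : C (l * N + d) = ⊤
  · rw [htop]
    exact ENat.mul_le_top_mul (by omega)
  rw [hC'] at htop
  obtain ⟨_, ⟨I, hI, a, ha, hsum, rfl⟩, hCm⟩ := exists_mem_reprCosts_eq_sInf G Nf νf htop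
  obtain ⟨i₁, hi₁, hmediant⟩ :=
    I.exists_mul_sum_le_mul_sum (hGne I hI) a Nf νf fun i _ => hNf i
  have hN : N / Nf i₁ * Nf i₁ = N := Nat.div_mul_cancel (hdvd i₁)
  have hshift := add_mul_mem_reprCosts G Nf νf hI ha hi₁ (N / Nf i₁)
  rw [hN, hsum, ← hstep] at hshift
  rw [hsum] at hmediant
  rw [hC', hC', hCm]
  calc _ ≤ ((∑ i ∈ I, a i * νf i + N / Nf i₁ * νf i₁ : ℕ) : ℕ∞) * ((l * N + d : ℕ) : ℕ∞) :=
        mul_le_mul_left (csInf_le (OrderBot.bddBelow _) (Set.mem_image_of_mem _ hshift)) _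
    _ ≤ _ := by
        rw [← Nat.cast_mul, ← Nat.cast_mul, Nat.cast_le, hstep]
        simpa only [hN] using Nat.add_mul_mul_le_mul_add_mul (k := N / Nf i₁) hmediant

/-- Theorem 1.8(2), monotonicity: with `C m` the minimal value of `∑ aᵢνᵢ` over
representations `∑ aᵢNᵢ = m` supported on a stratum `I ∈ G` (`+∞` if none exists),
the sequence `C (lN+d)/(lN+d)` weakly decreases in `l` (stated in `ℕ∞` by
cross-multiplication, which also encodes that finiteness propagates). -/
theorem stmt9 {ι : Type*} [Fintype ι] [Nonempty ι] [DecidableEq ι]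
    (Nf νf : ι → ℕ) (hNf : ∀ i, 0 < Nf i) (hνf : ∀ i, 0 < νf i)
    (N d : ℕ) (hd1 : 1 ≤ d) (hdN : d ≤ N) (hdvd : ∀ i, Nf i ∣ N)
    (G : Finset (Finset ι)) (hG : G.Nonempty)
    (hGne : ∀ I ∈ G, I.Nonempty) (hGgcd : ∀ I ∈ G, I.gcd Nf ∣ d)
    (C : ℕ → ℕ∞)
    (hC : ∀ m, C m = sInf ((fun v : ℕ => (v : ℕ∞)) ''
      {v | ∃ I ∈ G, ∃ a : ι → ℕ, (∀ i, i ∉ I → a i = 0) ∧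
        ∑ i ∈ I, a i * Nf i = m ∧ v = ∑ i ∈ I, a i * νf i})) :
    ∀ l : ℕ, C ((l + 1) * N + d) * ((l * N + d : ℕ) : ℕ∞)
      ≤ C (l * N + d) * (((l + 1) * N + d : ℕ) : ℕ∞) :=
  stmt9_general Nf νf hNf N d hdvd G hGne C hC
end

section
/- Let N be a positive integer, S a nonempty finite set, and N_i, ν_i positive integers with N_i ∣ N for i ∈ S. Fix 1 ≤ d ≤ N, let G_d be a nonempty collection of nonempty subsets I ⊂ S with gcd_{i∈I} N_i ∣ d, and define C_m as the minimum over I ∈ G_d and a ∈ ℕ^I with Σ_{i∈I} a_i N_i = m of Σ_{i∈I} a_i ν_i. Define lct_d := min over I ∈ G_d of min_{i∈I} ν_i/N_i. Then lim_{l→∞} C_{lN+d}/(lN+d) = lct_d. -/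
open scoped BigOperators
open Filter

private lemma bez10 {ι : Type*} [DecidableEq ι] (Nf : ι → ℕ) (s : Finset ι) :
    ∃ c : ι → ℤ, ∑ i ∈ s, c i * (Nf i : ℤ) = ((s.gcd Nf : ℕ) : ℤ) := by
  classical
  induction s using Finset.induction_on with
  | empty => exact ⟨0, by simp⟩
  | @insert j s' hj ih =>
    obtain ⟨c, hc⟩ := ih
    refine ⟨fun i => if i = j then Nat.gcdA (Nf j) (s'.gcd Nf)
      else Nat.gcdB (Nf j) (s'.gcd Nf) * c i, ?_⟩
    rw [Finset.sum_insert hj, Finset.gcd_insert]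
    have hg : ((GCDMonoid.gcd (Nf j) (s'.gcd Nf) : ℕ) : ℤ)
        = ((Nat.gcd (Nf j) (s'.gcd Nf) : ℕ) : ℤ) := by norm_cast
    rw [hg, Nat.gcd_eq_gcd_ab]
    have hsum : ∑ i ∈ s', (if i = j then Nat.gcdA (Nf j) (s'.gcd Nf)
        else Nat.gcdB (Nf j) (s'.gcd Nf) * c i) * (Nf i : ℤ)
        = Nat.gcdB (Nf j) (s'.gcd Nf) * ∑ i ∈ s', c i * (Nf i : ℤ) := by
      rw [Finset.mul_sum]
      refine Finset.sum_congr rfl fun i hi => ?_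
      rw [if_neg (by rintro rfl; exact hj hi)]; ring
    rw [hsum, hc]
    simp only [eq_self_iff_true, if_true]
    ring

private lemma lim10 (A c b e : ℝ) (he : 0 < e) :
    Tendsto (fun l : ℕ => (A + l * b) / (c + l * e)) atTop (nhds (b / e)) := by
  have h1 : Tendsto (fun l : ℕ => A / l + b) atTop (nhds b) := by
    simpa using (tendsto_const_div_atTop_nhds_zero_nat A).add tendsto_const_nhds
  have h2 : Tendsto (fun l : ℕ => c / l + e) atTop (nhds e) := by
    simpa using (tendsto_const_div_atTop_nhds_zero_nat c).add tendsto_const_nhds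
  have h3 := h1.div h2 (ne_of_gt he)
  apply h3.congr'
  filter_upwards [eventually_ge_atTop 1] with l hl
  have hl0 : (l : ℝ) ≠ 0 := by positivity
  simp only [Pi.div_apply]
  have e1 : A / l + b = (A + l * b) / l := by field_simp
  have e2 : c / l + e = (c + l * e) / l := by field_simp
  rw [e1, e2, div_div_div_cancel_right₀ hl0]

private lemma sInf_coe10 (S : Set ℕ) (hS : S.Nonempty) :
    sInf ((fun v : ℕ => (v : ℕ∞)) '' S) = ((sInf S : ℕ) : ℕ∞) := by
  apply le_antisymm
  · exact sInf_le ⟨sInf S, Nat.sInf_mem hS, rfl⟩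
  · refine le_sInf ?_
    rintro x ⟨v, hv, rfl⟩
    show ((sInf S : ℕ) : ℕ∞) ≤ (v : ℕ∞)
    exact_mod_cast Nat.sInf_le hv

/-- Theorem 1.8(2), limit: the normalized codimensions `C (lN+d)/(lN+d)` are
eventually finite and converge, as `l → ∞`, to the `d`-log canonical threshold
`lct_d = min { νᵢ/Nᵢ : i ∈ I, I ∈ G_d }`. -/
theorem stmt10 {ι : Type*} [Fintype ι] [Nonempty ι] [DecidableEq ι]
    (Nf νf : ι → ℕ) (hNf : ∀ i, 0 < Nf i) (hνf : ∀ i, 0 < νf i)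
    (N d : ℕ) (hd1 : 1 ≤ d) (hdN : d ≤ N) (hdvd : ∀ i, Nf i ∣ N)
    (G : Finset (Finset ι)) (hG : G.Nonempty)
    (hGne : ∀ I ∈ G, I.Nonempty) (hGgcd : ∀ I ∈ G, I.gcd Nf ∣ d)
    (C : ℕ → ℕ∞)
    (hC : ∀ m, C m = sInf ((fun v : ℕ => (v : ℕ∞)) ''
      {v | ∃ I ∈ G, ∃ a : ι → ℕ, (∀ i, i ∉ I → a i = 0) ∧
        ∑ i ∈ I, a i * Nf i = m ∧ v = ∑ i ∈ I, a i * νf i}))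
    (lct : ℝ)
    (hlct : lct = sInf {x : ℝ | ∃ I ∈ G, ∃ i ∈ I, x = (νf i : ℝ) / (Nf i : ℝ)}) :
    (∀ᶠ l : ℕ in Filter.atTop, C (l * N + d) ≠ ⊤) ∧
    Filter.Tendsto (fun l : ℕ => ((C (l * N + d)).toNat : ℝ) / ((l * N + d : ℕ) : ℝ))
      Filter.atTop (nhds lct) := by
  classical
  set S : ℕ → Set ℕ := fun m => {v | ∃ I ∈ G, ∃ a : ι → ℕ, (∀ i, i ∉ I → a i = 0) ∧
        ∑ i ∈ I, a i * Nf i = m ∧ v = ∑ i ∈ I, a i * νf i} with hS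
  have hC' : ∀ m, C m = sInf ((fun v : ℕ => (v : ℕ∞)) '' S m) := hC
  -- The set of candidate slopes
  set T : Set ℝ := {x : ℝ | ∃ I ∈ G, ∃ i ∈ I, x = (νf i : ℝ) / (Nf i : ℝ)} with hT
  have hTfin : T.Finite := by
    apply Set.Finite.subset (Set.finite_range (fun i : ι => (νf i : ℝ) / (Nf i : ℝ)))
    rintro x ⟨I, -, i, -, rfl⟩
    exact ⟨i, rfl⟩
  have hTne : T.Nonempty := by
    obtain ⟨I, hI⟩ := hG
    obtain ⟨i, hi⟩ := hGne I hI
    exact ⟨_, I, hI, i, hi, rfl⟩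
  have hlct_mem : lct ∈ T := by rw [hlct]; exact hTne.csInf_mem hTfin
  have hlct_le : ∀ I ∈ G, ∀ i ∈ I, lct ≤ (νf i : ℝ) / (Nf i : ℝ) := by
    intro I hI i hi
    rw [hlct]
    exact csInf_le hTfin.bddBelow ⟨I, hI, i, hi, rfl⟩
  obtain ⟨I₀, hI₀, i₀, hi₀, hlct_eq⟩ := hlct_mem
  set n : ℕ := Nf i₀ with hn
  have hnpos : 0 < n := hNf i₀
  have hNpos : 0 < N := lt_of_lt_of_le hd1 hdN
  -- Bezout: an integer combination equal to d
  obtain ⟨c, hc⟩ := bez10 Nf I₀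
  obtain ⟨w, hw⟩ := hGgcd I₀ hI₀
  set e : ι → ℤ := fun i => (w : ℤ) * c i with he
  have hesum : ∑ i ∈ I₀, e i * (Nf i : ℤ) = (d : ℤ) := by
    have : ∑ i ∈ I₀, e i * (Nf i : ℤ) = (w : ℤ) * ∑ i ∈ I₀, c i * (Nf i : ℤ) := by
      rw [Finset.mul_sum]; exact Finset.sum_congr rfl fun i _ => by rw [he]; ring
    rw [this, hc, hw]; push_cast; ring
  -- shift coefficients to be nonnegative
  set T₀ : ℕ := ∑ i ∈ I₀, (e i).natAbs with hT₀
  have hnonneg : ∀ i ∈ I₀, 0 ≤ e i + (T₀ : ℤ) * n := by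
    intro i hi
    have h1 : (e i).natAbs ≤ T₀ := by
      rw [hT₀]
      exact Finset.single_le_sum (f := fun j => (e j).natAbs) (fun j _ => Nat.zero_le _) hi
    have h2 : T₀ ≤ T₀ * n := Nat.le_mul_of_pos_right _ hnpos
    have h3 : ((e i).natAbs : ℤ) ≤ (T₀ : ℤ) * n := by exact_mod_cast le_trans h1 h2
    have h4 : -(e i) ≤ ((e i).natAbs : ℤ) := by omega
    linarith
  set b : ι → ℕ := fun i => if i ∈ I₀ then (e i + (T₀ : ℤ) * n).toNat else 0 with hb
  have hbZ : ∀ i ∈ I₀, (b i : ℤ) = e i + (T₀ : ℤ) * n := by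
    intro i hi
    rw [hb]; simp only [if_pos hi]
    exact Int.toNat_of_nonneg (hnonneg i hi)
  set t : ℕ := T₀ * ∑ i ∈ I₀, Nf i with ht
  have hsum2 : ∑ i ∈ I₀, (b i : ℤ) * (Nf i : ℤ)
      = ∑ i ∈ I₀, (e i + (T₀ : ℤ) * n) * (Nf i : ℤ) :=
    Finset.sum_congr rfl fun i hi => by rw [hbZ i hi]
  have hbsum : ∑ i ∈ I₀, b i * Nf i = d + t * n := by
    have hz : ((∑ i ∈ I₀, b i * Nf i : ℕ) : ℤ) = ((d + t * n : ℕ) : ℤ) := by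
      rw [ht]
      push_cast
      rw [hsum2]
      simp only [add_mul]
      rw [Finset.sum_add_distrib, hesum, ← Finset.mul_sum]
      ring
    exact_mod_cast hz
  set B : ℕ := ∑ i ∈ I₀, b i * νf i with hB
  set q : ℕ := N / n with hq
  have hqn : q * n = N := Nat.div_mul_cancel (hdvd i₀)
  have hq1 : 1 ≤ q := by
    rcases Nat.eq_zero_or_pos q with h | h
    · exfalso; rw [h, zero_mul] at hqn; omega
    · exact h
  -- the key construction, for l ≥ t
  have key : ∀ l : ℕ, t ≤ l →
      (B + (l * q - t) * νf i₀) ∈ S (l * N + d) := by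
    intro l hl
    have hkq : t ≤ l * q := le_trans hl (Nat.le_mul_of_pos_right _ (lt_of_lt_of_le one_pos hq1))
    set k : ℕ := l * q - t with hk
    refine ⟨I₀, hI₀, fun i => b i + if i = i₀ then k else 0, ?_, ?_, ?_⟩
    · intro i hi
      have hb0 : b i = 0 := by rw [hb]; simp [hi]
      have : i ≠ i₀ := by rintro rfl; exact hi hi₀
      simp [hb0, this]
    · have hsplit : ∑ i ∈ I₀, (b i + if i = i₀ then k else 0) * Nf i
          = (∑ i ∈ I₀, b i * Nf i) + k * n := by
        simp only [add_mul, Finset.sum_add_distrib]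
        congr 1
        rw [Finset.sum_congr rfl (fun i _ => by rw [ite_mul, zero_mul])]
        rw [Finset.sum_ite_eq' I₀ i₀ (fun i => k * Nf i), if_pos hi₀]
      rw [hsplit, hbsum]
      have h1 : k * n = l * N - t * n := by
        rw [hk, Nat.sub_mul, mul_assoc, hqn]
      have h2 : t * n ≤ l * N := by
        rw [← hqn, ← mul_assoc]
        exact Nat.mul_le_mul_right n hkq
      rw [h1]
      omega
    · have hsplit : ∑ i ∈ I₀, (b i + if i = i₀ then k else 0) * νf i
          = (∑ i ∈ I₀, b i * νf i) + k * νf i₀ := by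
        simp only [add_mul, Finset.sum_add_distrib]
        congr 1
        rw [Finset.sum_congr rfl (fun i _ => by rw [ite_mul, zero_mul])]
        rw [Finset.sum_ite_eq' I₀ i₀ (fun i => k * νf i), if_pos hi₀]
      rw [hsplit, hB]
  have hCval : ∀ l : ℕ, t ≤ l → C (l * N + d) = ((sInf (S (l * N + d)) : ℕ) : ℕ∞) := by
    intro l hl
    rw [hC' _, sInf_coe10 _ ⟨_, key l hl⟩]
  -- Part 1: eventual finiteness
  constructor
  · filter_upwards [eventually_ge_atTop t] with l hl
    rw [hCval l hl]
    exact ENat.coe_ne_top _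
  -- Part 2: the limit
  have hmpos : ∀ l : ℕ, (0 : ℝ) < ((l * N + d : ℕ) : ℝ) := by
    intro l
    have h0 : 0 < l * N + d := lt_of_lt_of_le hd1 (Nat.le_add_left d _)
    exact_mod_cast h0
  -- lower bound
  have hlow : ∀ᶠ l : ℕ in atTop,
      lct ≤ ((C (l * N + d)).toNat : ℝ) / ((l * N + d : ℕ) : ℝ) := by
    filter_upwards [eventually_ge_atTop t] with l hl
    rw [hCval l hl, ENat.toNat_coe]
    have hmem : sInf (S (l * N + d)) ∈ S (l * N + d) := Nat.sInf_mem ⟨_, key l hl⟩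
    obtain ⟨I, hI, a, hsupp, hsumN, hval⟩ := hmem
    rw [le_div_iff₀ (hmpos l)]
    calc lct * ((l * N + d : ℕ) : ℝ)
        = ∑ i ∈ I, (a i : ℝ) * (lct * Nf i) := by
          rw [← hsumN]
          push_cast
          rw [Finset.mul_sum]
          exact Finset.sum_congr rfl fun i _ => by ring
      _ ≤ ∑ i ∈ I, (a i : ℝ) * νf i := by
          refine Finset.sum_le_sum fun i hi => ?_
          have hN : (0 : ℝ) < Nf i := by exact_mod_cast hNf i
          have h1 : lct * Nf i ≤ νf i := by
            rw [← le_div_iff₀ hN]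
            exact hlct_le I hI i hi
          exact mul_le_mul_of_nonneg_left h1 (by positivity)
      _ = ((sInf (S (l * N + d)) : ℕ) : ℝ) := by
          rw [hval]; push_cast; ring
  -- upper bound
  have hupp : ∀ᶠ l : ℕ in atTop,
      ((C (l * N + d)).toNat : ℝ) / ((l * N + d : ℕ) : ℝ)
        ≤ ((B + (l * q - t) * νf i₀ : ℕ) : ℝ) / ((l * N + d : ℕ) : ℝ) := by
    filter_upwards [eventually_ge_atTop t] with l hl
    rw [hCval l hl, ENat.toNat_coe]
    have h1 : sInf (S (l * N + d)) ≤ B + (l * q - t) * νf i₀ := Nat.sInf_le (key l hl)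
    gcongr
  -- the upper function tends to lct
  have hu : Tendsto (fun l : ℕ =>
      ((B + (l * q - t) * νf i₀ : ℕ) : ℝ) / ((l * N + d : ℕ) : ℝ)) atTop (nhds lct) := by
    have hNR : (0 : ℝ) < N := by exact_mod_cast hNpos
    have hmain := lim10 ((B : ℝ) - t * νf i₀) d ((q : ℝ) * νf i₀) N hNR
    have hvl : ((q : ℝ) * νf i₀) / N = lct := by
      rw [hlct_eq, ← hqn]
      push_cast
      have hq0 : (0 : ℝ) < q := by exact_mod_cast lt_of_lt_of_le one_pos hq1
      exact mul_div_mul_left _ _ (ne_of_gt hq0)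
    rw [hvl] at hmain
    apply hmain.congr'
    filter_upwards [eventually_ge_atTop t] with l hl
    have hkq : t ≤ l * q := le_trans hl (Nat.le_mul_of_pos_right _ (lt_of_lt_of_le one_pos hq1))
    push_cast [Nat.cast_sub hkq]
    congr 1 <;> ring
  exact tendsto_of_tendsto_of_tendsto_of_le_of_le' tendsto_const_nhds hu hlow hupp
end

section
/- Let S be a finite nonempty index set with positive integers N_i, ν_i for i ∈ S, and let 𝒮 be a nonempty collection of nonempty subsets of S (the nonempty strata). Define α_I := min_{i∈I} ν_i/N_i and N_I := gcd_{i∈I} N_i for I ∈ 𝒮, and for a positive integer d with some N_I dividing d, define lct_d := min{α_I : I ∈ 𝒮, N_I ∣ d}. Call α ∈ ℚ remarkable if there is I ∈ 𝒮 with α = α_I such that for all J ∈ 𝒮 with α_J < α_I, N_J does not divide N_I. Then the set of remarkable numbers equals {lct_d : d ∈ ℕ_{>0} such that lct_d is defined}. -/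
/-- Lemma 1.5(2): with `α_I = min_{i∈I} νᵢ/Nᵢ` (computed in `WithTop ℚ` via `Finset.inf`)
and `N_I = gcd_{i∈I} Nᵢ`, the set of remarkable numbers equals the set of
`d`-log canonical thresholds `lct_d = min { α_I : I ∈ 𝒮, N_I ∣ d }` over those
`d > 0` for which some `N_I` divides `d`. -/
theorem stmt12 {ι : Type*} [DecidableEq ι] [Fintype ι]
    (Nf νf : ι → ℕ) (hNf : ∀ i, 0 < Nf i) (hνf : ∀ i, 0 < νf i)
    (𝒮 : Finset (Finset ι)) (h𝒮 : 𝒮.Nonempty) (hne : ∀ I ∈ 𝒮, I.Nonempty) :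
    {α : WithTop ℚ | ∃ I ∈ 𝒮,
        α = I.inf (fun i => ((νf i : ℚ) / (Nf i : ℚ) : WithTop ℚ)) ∧
        ∀ J ∈ 𝒮, J.inf (fun i => ((νf i : ℚ) / (Nf i : ℚ) : WithTop ℚ))
            < I.inf (fun i => ((νf i : ℚ) / (Nf i : ℚ) : WithTop ℚ)) →
          ¬ (J.gcd Nf ∣ I.gcd Nf)} =
    {α : WithTop ℚ | ∃ d : ℕ, 0 < d ∧
        (𝒮.filter (fun I => I.gcd Nf ∣ d)).Nonempty ∧
        α = (𝒮.filter (fun I => I.gcd Nf ∣ d)).inf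
          (fun I => I.inf (fun i => ((νf i : ℚ) / (Nf i : ℚ) : WithTop ℚ)))} := by
  set f : ι → WithTop ℚ := fun i => ((νf i : ℚ) / (Nf i : ℚ) : WithTop ℚ) with hf
  ext α
  simp only [Set.mem_setOf_eq]
  constructor
  · rintro ⟨I, hI, hα, hrem⟩
    refine ⟨I.gcd Nf, ?_, ⟨I, Finset.mem_filter.2 ⟨hI, dvd_refl _⟩⟩, ?_⟩
    · rcases hne I hI with ⟨i, hi⟩
      rcases Nat.eq_zero_or_pos (I.gcd Nf) with h0 | h
      · exact absurd ((Finset.gcd_eq_zero_iff.1 h0) i hi) (hNf i).ne'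
      · exact h
    · rw [hα]
      apply le_antisymm
      · exact Finset.le_inf fun J hJ => by
          rcases Finset.mem_filter.1 hJ with ⟨hJS, hdvd⟩
          exact not_lt.1 fun hlt => hrem J hJS hlt hdvd
      · exact Finset.inf_le (Finset.mem_filter.2 ⟨hI, dvd_refl _⟩)
  · rintro ⟨d, hd, hfil, hα⟩
    obtain ⟨I, hI, hIeq⟩ := Finset.exists_mem_eq_inf _ hfil
      (fun I => I.inf f)
    rcases Finset.mem_filter.1 hI with ⟨hIS, hIdvd⟩
    refine ⟨I, hIS, by rw [hα, hIeq], ?_⟩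
    intro J hJ hlt hdvd
    have hJmem : J ∈ 𝒮.filter (fun I => I.gcd Nf ∣ d) :=
      Finset.mem_filter.2 ⟨hJ, hdvd.trans hIdvd⟩
    have h2 := Finset.inf_le (f := fun I => I.inf f) hJmem
    rw [hIeq] at h2
    exact absurd hlt (not_lt.2 h2)
end
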